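/- Quadratic collision identity on the kernel of the linearized operator: let a, c ∈ ℝ, b ∈ ℝ³, and f₁(v) = (a + b·v + c(|v|²−3)/2) √μ(v). Then for every v ∈ ℝ³, Γ(f₁, f₁)(v) = L(f₁²/(2√μ))(v); equivalently, Q(f₁√μ, f₁√μ)(v) + Q(μ, f₁²)(v) = 0. -/
import Mathlib


open MeasureTheory Real
open scoped RealInnerProductSpace

noncomputable section

/-- The surface measure on the unit sphere `S² ⊂ ℝ³`. -/
def sphereMeasure : Measure (Metric.sphere (0 : EuclideanSpace ℝ (Fin 3)) 1) :=
  (volume : Measure (EuclideanSpace ℝ (Fin 3))).toSphere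

/-- The hard-sphere Boltzmann collision operator `Q(F,G)`. -/
def collisionOp (F G : EuclideanSpace ℝ (Fin 3) → ℝ) (v : EuclideanSpace ℝ (Fin 3)) : ℝ :=
  (1 / 2) *
    ∫ vs : EuclideanSpace ℝ (Fin 3),
      ∫ u : Metric.sphere (0 : EuclideanSpace ℝ (Fin 3)) 1,
        |⟪v - vs, (u : EuclideanSpace ℝ (Fin 3))⟫| *
          (F (v - ⟪v - vs, (u : EuclideanSpace ℝ (Fin 3))⟫ • (u : EuclideanSpace ℝ (Fin 3))) *
              G (vs + ⟪v - vs, (u : EuclideanSpace ℝ (Fin 3))⟫ • (u : EuclideanSpace ℝ (Fin 3))) +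
            G (v - ⟪v - vs, (u : EuclideanSpace ℝ (Fin 3))⟫ • (u : EuclideanSpace ℝ (Fin 3))) *
              F (vs + ⟪v - vs, (u : EuclideanSpace ℝ (Fin 3))⟫ • (u : EuclideanSpace ℝ (Fin 3))) -
            F v * G vs - G v * F vs) ∂sphereMeasure

/-- The global Maxwellian `μ(v) = (2π)^{−3/2} e^{−|v|²/2}`. -/
def globalMaxwellian (v : EuclideanSpace ℝ (Fin 3)) : ℝ :=
  (2 * Real.pi) ^ (-(3 : ℝ) / 2) * Real.exp (-‖v‖ ^ 2 / 2)

/-- The linearized Boltzmann operator `L f = −(2/√μ) Q(μ, √μ f)`. -/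
def linearizedOp (f : EuclideanSpace ℝ (Fin 3) → ℝ) (v : EuclideanSpace ℝ (Fin 3)) : ℝ :=
  (-2 / Real.sqrt (globalMaxwellian v)) *
    collisionOp globalMaxwellian (fun w => Real.sqrt (globalMaxwellian w) * f w) v

/-- The nonlinear collision form `Γ(f,g) = (1/√μ) Q(√μ f, √μ g)`. -/
def gammaOp (f g : EuclideanSpace ℝ (Fin 3) → ℝ) (v : EuclideanSpace ℝ (Fin 3)) : ℝ :=
  (1 / Real.sqrt (globalMaxwellian v)) *
    collisionOp (fun w => Real.sqrt (globalMaxwellian w) * f w)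
      (fun w => Real.sqrt (globalMaxwellian w) * g w) v

/-- A kernel element `f₁(v) = (a + b·v + c(|v|²−3)/2)√μ(v)` of `L`. -/
def kernelElem (a c : ℝ) (b : EuclideanSpace ℝ (Fin 3)) (v : EuclideanSpace ℝ (Fin 3)) : ℝ :=
  (a + ⟪b, v⟫ + c * (‖v‖ ^ 2 - 3) / 2) * Real.sqrt (globalMaxwellian v)

private lemma mu_pos (v : EuclideanSpace ℝ (Fin 3)) : 0 < globalMaxwellian v := by
  unfold globalMaxwellian
  positivity

private lemma sqrt_mu_sq (v : EuclideanSpace ℝ (Fin 3)) :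
    Real.sqrt (globalMaxwellian v) * Real.sqrt (globalMaxwellian v) = globalMaxwellian v :=
  Real.mul_self_sqrt (mu_pos v).le

private lemma norm_conserve (v vs u : EuclideanSpace ℝ (Fin 3)) (hu : ‖u‖ = 1) :
    ‖v - ⟪v - vs, u⟫ • u‖ ^ 2 + ‖vs + ⟪v - vs, u⟫ • u‖ ^ 2 = ‖v‖ ^ 2 + ‖vs‖ ^ 2 := by
  have hk : ⟪v - vs, u⟫ = ⟪v, u⟫ - ⟪vs, u⟫ := inner_sub_left _ _ _
  have h1 : ‖v - ⟪v - vs, u⟫ • u‖ ^ 2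
      = ‖v‖ ^ 2 - 2 * (⟪v - vs, u⟫ * ⟪v, u⟫) + ⟪v - vs, u⟫ ^ 2 := by
    rw [norm_sub_sq_real, real_inner_smul_right, norm_smul, hu]
    simp [Real.norm_eq_abs, mul_pow, sq_abs]
  have h2 : ‖vs + ⟪v - vs, u⟫ • u‖ ^ 2
      = ‖vs‖ ^ 2 + 2 * (⟪v - vs, u⟫ * ⟪vs, u⟫) + ⟪v - vs, u⟫ ^ 2 := by
    rw [norm_add_sq_real, real_inner_smul_right, norm_smul, hu]
    simp [Real.norm_eq_abs, mul_pow, sq_abs]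
  rw [h1, h2, hk]
  ring

private lemma mu_conserve (v vs u : EuclideanSpace ℝ (Fin 3)) (hu : ‖u‖ = 1) :
    globalMaxwellian (v - ⟪v - vs, u⟫ • u) * globalMaxwellian (vs + ⟪v - vs, u⟫ • u)
      = globalMaxwellian v * globalMaxwellian vs := by
  have h := norm_conserve v vs u hu
  unfold globalMaxwellian
  rw [mul_mul_mul_comm, ← Real.exp_add, mul_mul_mul_comm, ← Real.exp_add]
  congr 1
  rw [show -‖v - ⟪v - vs, u⟫ • u‖ ^ 2 / 2 + -‖vs + ⟪v - vs, u⟫ • u‖ ^ 2 / 2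
      = -(‖v - ⟪v - vs, u⟫ • u‖ ^ 2 + ‖vs + ⟪v - vs, u⟫ • u‖ ^ 2) / 2 by ring, h]
  ring

private lemma P_conserve (a c : ℝ) (b : EuclideanSpace ℝ (Fin 3))
    (v vs u : EuclideanSpace ℝ (Fin 3)) (hu : ‖u‖ = 1) :
    (a + ⟪b, v - ⟪v - vs, u⟫ • u⟫ + c * (‖v - ⟪v - vs, u⟫ • u‖ ^ 2 - 3) / 2)
      + (a + ⟪b, vs + ⟪v - vs, u⟫ • u⟫ + c * (‖vs + ⟪v - vs, u⟫ • u‖ ^ 2 - 3) / 2)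
      = (a + ⟪b, v⟫ + c * (‖v‖ ^ 2 - 3) / 2) + (a + ⟪b, vs⟫ + c * (‖vs‖ ^ 2 - 3) / 2) := by
  have h := norm_conserve v vs u hu
  have hb : ⟪b, v - ⟪v - vs, u⟫ • u⟫ + ⟪b, vs + ⟪v - vs, u⟫ • u⟫ = ⟪b, v⟫ + ⟪b, vs⟫ := by
    rw [inner_sub_right, inner_add_right]; ring
  linear_combination hb + (c / 2) * h

/-- The key cancellation: `Q(Pμ, Pμ) = -Q(μ, P²μ)`. -/
private lemma key_cancel (a c : ℝ) (b : EuclideanSpace ℝ (Fin 3))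
    (v : EuclideanSpace ℝ (Fin 3)) :
    collisionOp (fun w => (a + ⟪b, w⟫ + c * (‖w‖ ^ 2 - 3) / 2) * globalMaxwellian w)
        (fun w => (a + ⟪b, w⟫ + c * (‖w‖ ^ 2 - 3) / 2) * globalMaxwellian w) v
      = - collisionOp globalMaxwellian
          (fun w => (a + ⟪b, w⟫ + c * (‖w‖ ^ 2 - 3) / 2) ^ 2 * globalMaxwellian w) v := by
  unfold collisionOp
  rw [← mul_neg, ← integral_neg]
  congr 1
  refine integral_congr_ae (Filter.Eventually.of_forall fun vs => ?_)
  dsimp only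
  rw [← integral_neg]
  refine integral_congr_ae (Filter.Eventually.of_forall fun u => ?_)
  dsimp only
  have hu : ‖(u : EuclideanSpace ℝ (Fin 3))‖ = 1 := by
    simpa using mem_sphere_zero_iff_norm.mp u.2
  have hμ := mu_conserve v vs (u : EuclideanSpace ℝ (Fin 3)) hu
  have hP := P_conserve a c b v vs (u : EuclideanSpace ℝ (Fin 3)) hu
  set k := ⟪v - vs, (u : EuclideanSpace ℝ (Fin 3))⟫
  set v' := v - k • (u : EuclideanSpace ℝ (Fin 3))
  set vs' := vs + k • (u : EuclideanSpace ℝ (Fin 3))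
  set Pv := a + ⟪b, v⟫ + c * (‖v‖ ^ 2 - 3) / 2
  set Pvs := a + ⟪b, vs⟫ + c * (‖vs‖ ^ 2 - 3) / 2
  set Pv' := a + ⟪b, v'⟫ + c * (‖v'‖ ^ 2 - 3) / 2
  set Pvs' := a + ⟪b, vs'⟫ + c * (‖vs'‖ ^ 2 - 3) / 2
  set m := globalMaxwellian
  have expand :
      |k| * (Pv' * m v' * (Pvs' * m vs') + Pv' * m v' * (Pvs' * m vs')
          - Pv * m v * (Pvs * m vs) - Pv * m v * (Pvs * m vs))
        + |k| * (m v' * (Pvs' ^ 2 * m vs') + Pv' ^ 2 * m v' * m vs'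
          - m v * (Pvs ^ 2 * m vs) - Pv ^ 2 * m v * m vs)
      = |k| * ((m v' * m vs') * (Pv' + Pvs') ^ 2 - (m v * m vs) * (Pv + Pvs) ^ 2) := by
    ring
  have hzero :
      |k| * (Pv' * m v' * (Pvs' * m vs') + Pv' * m v' * (Pvs' * m vs')
          - Pv * m v * (Pvs * m vs) - Pv * m v * (Pvs * m vs))
        + |k| * (m v' * (Pvs' ^ 2 * m vs') + Pv' ^ 2 * m v' * m vs'
          - m v * (Pvs ^ 2 * m vs) - Pv ^ 2 * m v * m vs) = 0 := by
    rw [expand, hμ, hP]; ring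
  linarith [hzero]

/-- Quadratic collision identity on the kernel of the linearized operator:
`Γ(f₁,f₁) = L(f₁²/(2√μ))`, equivalently `Q(f₁√μ, f₁√μ) + Q(μ, f₁²) = 0`. -/
theorem quadratic_collision_identity (a c : ℝ) (b : EuclideanSpace ℝ (Fin 3))
    (v : EuclideanSpace ℝ (Fin 3)) :
    gammaOp (kernelElem a c b) (kernelElem a c b) v =
      linearizedOp (fun w => kernelElem a c b w ^ 2 / (2 * Real.sqrt (globalMaxwellian w))) v ∧
    collisionOp (fun w => kernelElem a c b w * Real.sqrt (globalMaxwellian w))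
        (fun w => kernelElem a c b w * Real.sqrt (globalMaxwellian w)) v +
      collisionOp globalMaxwellian (fun w => kernelElem a c b w ^ 2) v = 0 := by
  have hsne : ∀ w : EuclideanSpace ℝ (Fin 3), Real.sqrt (globalMaxwellian w) ≠ 0 :=
    fun w => (Real.sqrt_pos.mpr (mu_pos w)).ne'
  have hF : (fun w => Real.sqrt (globalMaxwellian w) * kernelElem a c b w)
      = fun w => (a + ⟪b, w⟫ + c * (‖w‖ ^ 2 - 3) / 2) * globalMaxwellian w := by
    funext w; unfold kernelElem
    linear_combination (a + ⟪b, w⟫ + c * (‖w‖ ^ 2 - 3) / 2) * sqrt_mu_sq w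
  have hF' : (fun w => kernelElem a c b w * Real.sqrt (globalMaxwellian w))
      = fun w => (a + ⟪b, w⟫ + c * (‖w‖ ^ 2 - 3) / 2) * globalMaxwellian w := by
    funext w; unfold kernelElem
    linear_combination (a + ⟪b, w⟫ + c * (‖w‖ ^ 2 - 3) / 2) * sqrt_mu_sq w
  have hG : (fun w => kernelElem a c b w ^ 2)
      = fun w => (a + ⟪b, w⟫ + c * (‖w‖ ^ 2 - 3) / 2) ^ 2 * globalMaxwellian w := by
    funext w; unfold kernelElem
    linear_combination (a + ⟪b, w⟫ + c * (‖w‖ ^ 2 - 3) / 2) ^ 2 * sqrt_mu_sq w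
  have hG2 : (fun w => Real.sqrt (globalMaxwellian w) *
        (kernelElem a c b w ^ 2 / (2 * Real.sqrt (globalMaxwellian w))))
      = fun w => (1 / 2) * ((a + ⟪b, w⟫ + c * (‖w‖ ^ 2 - 3) / 2) ^ 2 * globalMaxwellian w) := by
    funext w
    rw [show Real.sqrt (globalMaxwellian w) *
        (kernelElem a c b w ^ 2 / (2 * Real.sqrt (globalMaxwellian w)))
        = kernelElem a c b w ^ 2 / 2 by
      field_simp [hsne w]]
    unfold kernelElem
    linear_combination ((a + ⟪b, w⟫ + c * (‖w‖ ^ 2 - 3) / 2) ^ 2 / 2) * sqrt_mu_sq w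
  have half : collisionOp globalMaxwellian
      (fun w => (1 / 2) * ((a + ⟪b, w⟫ + c * (‖w‖ ^ 2 - 3) / 2) ^ 2 * globalMaxwellian w)) v
      = (1 / 2) * collisionOp globalMaxwellian
        (fun w => (a + ⟪b, w⟫ + c * (‖w‖ ^ 2 - 3) / 2) ^ 2 * globalMaxwellian w) v := by
    unfold collisionOp
    rw [show ((1 : ℝ) / 2) * ((1 / 2) * ∫ vs, ∫ u, _ ∂sphereMeasure)
        = (1 / 2) * ((1 / 2) * _) from rfl]
    congr 1
    rw [← integral_const_mul]
    refine integral_congr_ae (Filter.Eventually.of_forall fun vs => ?_)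
    dsimp only
    rw [← integral_const_mul]
    refine integral_congr_ae (Filter.Eventually.of_forall fun u => ?_)
    dsimp only
    ring
  have key := key_cancel a c b v
  constructor
  · unfold gammaOp linearizedOp
    rw [hF, hG2, half, key]
    ring
  · rw [hF', hG, key]
    ring
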